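/- arXiv:2503.03596 — 3 statements merged into one kernel-verified Lean document; each statement's English description precedes it below -/
import Mathlib

section
/- For the half-step difference operator D and average A on a uniform grid with step h, any function u, any natural number m ≥ 2, and any point x, one has the bound |D(|u|^(m-1)·u)(x)| ≤ C·(A|u|(x))^(m-1)·|D u(x)| for a constant C depending only on m (one may take C = 2^m + 2^(m-1)). -/
/-- Half-step difference operator on a uniform grid with step `h`. -/
noncomputable def Dop (h : ℝ) (f : ℝ → ℝ) (x : ℝ) : ℝ := (f (x + h / 2) - f (x - h / 2)) / h

/-- Half-step average operator on a uniform grid with step `h`. -/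
noncomputable def Aop (h : ℝ) (f : ℝ → ℝ) (x : ℝ) : ℝ := (f (x + h / 2) + f (x - h / 2)) / 2

lemma geom_sum_le_add_pow (k : ℕ) (x y : ℝ) (hx : 0 ≤ x) (hy : 0 ≤ y) :
    (∑ i ∈ Finset.range (k + 1), x ^ i * y ^ (k - i)) ≤ (x + y) ^ k := by
  rw [add_pow]
  apply Finset.sum_le_sum
  intro i hi
  have hik : i ≤ k := Nat.lt_succ_iff.mp (Finset.mem_range.mp hi)
  have h1 : (1 : ℝ) ≤ (k.choose i : ℝ) := by
    exact_mod_cast Nat.choose_pos hik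
  nlinarith [pow_nonneg hx i, pow_nonneg hy (k - i), mul_nonneg (pow_nonneg hx i) (pow_nonneg hy (k - i))]

lemma pow_sub_pow_abs_le (k : ℕ) (x y : ℝ) (hx : 0 ≤ x) (hy : 0 ≤ y) :
    |x ^ (k + 1) - y ^ (k + 1)| ≤ (x + y) ^ k * |x - y| := by
  have h1 := geom_sum₂_mul x y (k + 1)
  rw [← h1, abs_mul]
  apply mul_le_mul_of_nonneg_right _ (abs_nonneg _)
  calc |∑ i ∈ Finset.range (k + 1), x ^ i * y ^ (k + 1 - 1 - i)|
      ≤ ∑ i ∈ Finset.range (k + 1), |x ^ i * y ^ (k + 1 - 1 - i)| := Finset.abs_sum_le_sum_abs _ _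
    _ = ∑ i ∈ Finset.range (k + 1), x ^ i * y ^ (k - i) := by
        apply Finset.sum_congr rfl
        intro i _
        rw [abs_mul, abs_pow, abs_pow, abs_of_nonneg hx, abs_of_nonneg hy]
        norm_num
    _ ≤ (x + y) ^ k := geom_sum_le_add_pow k x y hx hy

lemma key_ineq (k : ℕ) (a b : ℝ) :
    |(|a| ^ (k + 1) * a - |b| ^ (k + 1) * b)| ≤ 2 * (|a| + |b|) ^ (k + 1) * |a - b| := by
  have habs : |a| ^ (k + 1) * a - |b| ^ (k + 1) * b
      = |a| ^ (k + 1) * (a - b) + (|a| ^ (k + 1) - |b| ^ (k + 1)) * b := by ring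
  have h1 : |(|a| ^ (k + 1) * (a - b))| ≤ (|a| + |b|) ^ (k + 1) * |a - b| := by
    rw [abs_mul, abs_pow, abs_abs]
    apply mul_le_mul_of_nonneg_right _ (abs_nonneg _)
    apply pow_le_pow_left₀ (abs_nonneg a)
    linarith [abs_nonneg b]
  have h2 : |(|a| ^ (k + 1) - |b| ^ (k + 1)) * b| ≤ (|a| + |b|) ^ (k + 1) * |a - b| := by
    rw [abs_mul]
    have h3 : |(|a| ^ (k + 1) - |b| ^ (k + 1))| ≤ (|a| + |b|) ^ k * |(|a| - |b|)| :=
      pow_sub_pow_abs_le k |a| |b| (abs_nonneg a) (abs_nonneg b)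
    have h4 : |(|a| - |b|)| ≤ |a - b| := abs_abs_sub_abs_le_abs_sub a b
    calc |(|a| ^ (k + 1) - |b| ^ (k + 1))| * |b|
        ≤ ((|a| + |b|) ^ k * |a - b|) * (|a| + |b|) := by
          apply mul_le_mul
          · refine h3.trans ?_
            exact mul_le_mul_of_nonneg_left h4 (by positivity)
          · linarith [abs_nonneg a]
          · exact abs_nonneg b
          · positivity
      _ = (|a| + |b|) ^ (k + 1) * |a - b| := by ring
  calc |(|a| ^ (k + 1) * a - |b| ^ (k + 1) * b)|
      ≤ |(|a| ^ (k + 1) * (a - b))| + |(|a| ^ (k + 1) - |b| ^ (k + 1)) * b| := by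
        rw [habs]; exact abs_add_le _ _
    _ ≤ 2 * (|a| + |b|) ^ (k + 1) * |a - b| := by linarith

/-- Pointwise bound `|D(|u|^(m-1) u)| ≤ C (A|u|)^(m-1) |D u|` with `C = 2^m + 2^(m-1)`. -/
theorem diff_abs_pow_mul_bound (h : ℝ) (hh : 0 < h) (u : ℝ → ℝ) (m : ℕ) (hm : 2 ≤ m)
    (x : ℝ) :
    |Dop h (fun y => |u y| ^ (m - 1) * u y) x| ≤
      ((2 : ℝ) ^ m + 2 ^ (m - 1)) * (Aop h (fun y => |u y|) x) ^ (m - 1) * |Dop h u x| := by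
  obtain ⟨k, rfl⟩ : ∃ k, m = k + 2 := ⟨m - 2, by omega⟩
  simp only [Dop, Aop]
  set a := u (x + h / 2)
  set b := u (x - h / 2)
  have hmm : k + 2 - 1 = k + 1 := by omega
  rw [hmm, abs_div, abs_of_pos hh, abs_div, abs_of_pos hh, ← mul_div_assoc]
  gcongr
  have hC : ((2 : ℝ) ^ (k + 2) + 2 ^ (k + 1)) * ((|a| + |b|) / 2) ^ (k + 1)
      = 3 * (|a| + |b|) ^ (k + 1) := by
    rw [div_pow]
    have : (2 : ℝ) ^ (k + 1) ≠ 0 := by positivity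
    field_simp
    ring
  rw [hC]
  have := key_ineq k a b
  nlinarith [abs_nonneg (a - b), pow_nonneg (by positivity : (0:ℝ) ≤ |a| + |b|) (k + 1)]
end

section
/- Discrete Gagliardo–Nirenberg–Sobolev inequality in dimension n ≥ 2 for p = 1: there exists a constant C independent of h such that for every function u on the uniform grid mesh M = ((0,1) ∩ hℤ)ⁿ vanishing on the boundary, (h^n · ∑_{x∈M} |u(x)|^{n/(n-1)})^{(n-1)/n} ≤ C · ∑_{i=1}^{n} h^n · ∑_{x∈Mᵢ*} |Dᵢu(x)|, where Dᵢ is the half-step difference in direction i and Mᵢ* is the dual mesh in direction i. In fact the sharper product form holds: the left side is bounded by ∏_{i=1}^{n} (h^n ∑_{Mᵢ*} |Dᵢu|)^{1/n}. -/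
/-- Interior mesh points of the grid `((0,1) ∩ hℤ)ⁿ`, `h = 1/(N+1)`, indexed by
integer coordinates `1,…,N` (within the full index range `0,…,N+1`). -/
def interiorMesh (n N : ℕ) : Finset (Fin n → Fin (N + 2)) :=
  Finset.univ.filter fun x => ∀ j, 1 ≤ (x j : ℕ) ∧ (x j : ℕ) ≤ N

/-- Dual mesh in direction `i`: the `i`-th coordinate indexes the half-point
between `x i` and `x i + 1` (so `x i ∈ {0,…,N}`), the others are interior. -/
def dualMesh (n N : ℕ) (i : Fin n) : Finset (Fin n → Fin (N + 2)) :=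
  Finset.univ.filter fun x =>
    (x i : ℕ) ≤ N ∧ ∀ j, j ≠ i → 1 ≤ (x j : ℕ) ∧ (x j : ℕ) ≤ N

/-- Half-step difference quotient of `u` in direction `i`, evaluated at the dual
point indexed by `x` (the half-point between `x i` and `x i + 1`). -/
noncomputable def Ddir (n N : ℕ) (h : ℝ) (u : (Fin n → ℕ) → ℝ) (i : Fin n)
    (x : Fin n → Fin (N + 2)) : ℝ :=
  (u (Function.update (fun j => (x j : ℕ)) i ((x i : ℕ) + 1)) - u fun j => (x j : ℕ)) / h

section GNSaux
open Finset NNReal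

lemma gen_holder {ι κ : Type*} [Fintype κ] (s : Finset ι) (c : ι → κ → ℝ≥0) (w : ι → ℝ≥0)
    (hw : ∀ i ∈ s, w i ≠ 0) (hw1 : ∑ i ∈ s, w i = 1) :
    ∑ a : κ, ∏ i ∈ s, c i a ^ (w i : ℝ) ≤ ∏ i ∈ s, (∑ a : κ, c i a) ^ (w i : ℝ) := by
  by_cases hz : ∃ i ∈ s, ∑ a : κ, c i a = 0
  · obtain ⟨i0, hi0, h0⟩ := hz
    have hc0 : ∀ a : κ, c i0 a = 0 := fun a => by
      have := Finset.sum_eq_zero_iff.mp h0 a (mem_univ a); exact this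
    have hterm : ∀ a : κ, ∏ i ∈ s, c i a ^ (w i : ℝ) = 0 := fun a =>
      Finset.prod_eq_zero hi0 (by
        rw [hc0 a]
        exact NNReal.zero_rpow (by exact_mod_cast hw i0 hi0))
    rw [Finset.sum_eq_zero fun a _ => hterm a]
    exact zero_le
  · push_neg at hz
    have key : ∀ a : κ, ∏ i ∈ s, c i a ^ (w i : ℝ) =
        (∏ i ∈ s, (∑ b : κ, c i b) ^ (w i : ℝ)) *
          ∏ i ∈ s, (c i a / ∑ b : κ, c i b) ^ (w i : ℝ) := by
      intro a
      rw [← Finset.prod_mul_distrib]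
      refine Finset.prod_congr rfl fun i hi => ?_
      rw [← NNReal.mul_rpow]
      congr 1
      rw [mul_comm, div_mul_cancel₀ _ (hz i hi)]
    calc ∑ a : κ, ∏ i ∈ s, c i a ^ (w i : ℝ)
        = (∏ i ∈ s, (∑ b : κ, c i b) ^ (w i : ℝ)) *
            ∑ a : κ, ∏ i ∈ s, (c i a / ∑ b : κ, c i b) ^ (w i : ℝ) := by
          rw [Finset.mul_sum]; exact Finset.sum_congr rfl fun a _ => key a
      _ ≤ (∏ i ∈ s, (∑ b : κ, c i b) ^ (w i : ℝ)) * 1 := by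
          refine mul_le_mul_right ?_ _
          calc ∑ a : κ, ∏ i ∈ s, (c i a / ∑ b : κ, c i b) ^ (w i : ℝ)
              ≤ ∑ a : κ, ∑ i ∈ s, w i * (c i a / ∑ b : κ, c i b) :=
                Finset.sum_le_sum fun a _ =>
                  NNReal.geom_mean_le_arith_mean_weighted s w _ hw1
            _ = ∑ i ∈ s, w i * ((∑ a : κ, c i a) / ∑ b : κ, c i b) := by
                rw [Finset.sum_comm]
                exact Finset.sum_congr rfl fun i _ => by
                  rw [← Finset.mul_sum, ← Finset.sum_div]
            _ = 1 := by
                rw [← hw1]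
                exact Finset.sum_congr rfl fun i hi => by
                  rw [div_self (hz i hi), mul_one]
      _ = _ := mul_one _

lemma sum_cons_eq {m k : ℕ} (F : (Fin (k + 1) → Fin m) → ℝ≥0) :
    ∑ x : Fin (k + 1) → Fin m, F x =
      ∑ a : Fin m, ∑ y : Fin k → Fin m, F (Fin.cons a y) := by
  rw [← Equiv.sum_comp (Fin.consEquiv fun _ => Fin m) F, Fintype.sum_prod_type]
  rfl

lemma LW_base (m : ℕ) (hm : m ≠ 0) (f : Fin 2 → (Fin 2 → Fin m) → ℝ≥0)
    (hf : ∀ i x a, f i (Function.update x i a) = f i x) :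
    ∑ x : Fin 2 → Fin m, ∏ i, f i x ≤
      ∏ i, ((m : ℝ≥0)⁻¹ * ∑ x : Fin 2 → Fin m, f i x) := by
  have hm' : (m : ℝ≥0) ≠ 0 := Nat.cast_ne_zero.mpr hm
  set z : Fin m := ⟨0, Nat.pos_of_ne_zero hm⟩ with hz
  have h0 : ∀ (a b : Fin m) (y : Fin 1 → Fin m),
      f 0 (Fin.cons a y) = f 0 (Fin.cons b y) := by
    intro a b y
    have := hf 0 (Fin.cons b y) a
    rwa [Fin.update_cons_zero] at this
  have h1 : ∀ (a : Fin m) (y y' : Fin 1 → Fin m),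
      f 1 (Fin.cons a y) = f 1 (Fin.cons a y') := by
    intro a y y'
    have hy : y = Function.update y' 0 (y 0) := by
      funext j
      have : j = 0 := Subsingleton.elim _ _
      subst this; simp
    rw [hy, Fin.cons_update]
    exact hf 1 (Fin.cons a y') (y 0)
  have hS0 : ∀ a : Fin m, ∑ y : Fin 1 → Fin m, f 0 (Fin.cons a y) =
      (m : ℝ≥0)⁻¹ * ∑ x : Fin 2 → Fin m, f 0 x := by
    intro a
    rw [sum_cons_eq (f 0),
      show (∑ b : Fin m, ∑ y : Fin 1 → Fin m, f 0 (Fin.cons b y)) =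
          ∑ _b : Fin m, ∑ y : Fin 1 → Fin m, f 0 (Fin.cons a y) from
        Finset.sum_congr rfl fun b _ => Finset.sum_congr rfl fun y _ => h0 b a y,
      Finset.sum_const, Finset.card_univ, Fintype.card_fin, nsmul_eq_mul,
      inv_mul_cancel_left₀ hm']
  have hS1 : ∑ a : Fin m, f 1 (Fin.cons a fun _ => z) =
      (m : ℝ≥0)⁻¹ * ∑ x : Fin 2 → Fin m, f 1 x := by
    rw [sum_cons_eq (f 1)]
    have : ∀ a : Fin m, ∑ y : Fin 1 → Fin m, f 1 (Fin.cons a y) =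
        (m : ℝ≥0) * f 1 (Fin.cons a fun _ => z) := by
      intro a
      rw [show (∑ y : Fin 1 → Fin m, f 1 (Fin.cons a y)) =
          ∑ _y : Fin 1 → Fin m, f 1 (Fin.cons a fun _ => z) from
        Finset.sum_congr rfl fun y _ => h1 a y _]
      rw [Finset.sum_const, Finset.card_univ, nsmul_eq_mul]
      congr 1
      simp [Fintype.card_fun]
    rw [Finset.sum_congr rfl fun a _ => this a, ← Finset.mul_sum,
      inv_mul_cancel_left₀ hm']
  refine le_of_eq ?_
  calc ∑ x : Fin 2 → Fin m, ∏ i, f i x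
      = ∑ a : Fin m, ∑ y : Fin 1 → Fin m, ∏ i, f i (Fin.cons a y) :=
        sum_cons_eq _
    _ = ∑ a : Fin m, ∑ y : Fin 1 → Fin m,
          (f 0 (Fin.cons z y) * f 1 (Fin.cons a fun _ => z)) :=
        Finset.sum_congr rfl fun a _ => Finset.sum_congr rfl fun y _ => by
          rw [Fin.prod_univ_two, h0 a z y, h1 a y fun _ => z]
    _ = ∑ a : Fin m, ((∑ y : Fin 1 → Fin m, f 0 (Fin.cons z y)) *
          f 1 (Fin.cons a fun _ => z)) :=
        Finset.sum_congr rfl fun a _ => (Finset.sum_mul _ _ _).symm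
    _ = (∑ y : Fin 1 → Fin m, f 0 (Fin.cons z y)) *
          ∑ a : Fin m, f 1 (Fin.cons a fun _ => z) := (Finset.mul_sum _ _ _).symm
    _ = ((m : ℝ≥0)⁻¹ * ∑ x : Fin 2 → Fin m, f 0 x) *
          ((m : ℝ≥0)⁻¹ * ∑ x : Fin 2 → Fin m, f 1 x) := by rw [hS0 z, hS1]
    _ = _ := (Fin.prod_univ_two fun i => (m : ℝ≥0)⁻¹ * ∑ x : Fin 2 → Fin m, f i x).symm

lemma LW_aux (m : ℕ) (hm : m ≠ 0) :
    ∀ (n : ℕ) (f : Fin (n + 2) → (Fin (n + 2) → Fin m) → ℝ≥0),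
      (∀ i x a, f i (Function.update x i a) = f i x) →
      ∑ x : Fin (n + 2) → Fin m, ∏ i, f i x ^ (((n : ℝ) + 1)⁻¹) ≤
        ∏ i, ((m : ℝ≥0)⁻¹ * ∑ x : Fin (n + 2) → Fin m, f i x) ^ (((n : ℝ) + 1)⁻¹) := by
  have hm' : (m : ℝ≥0) ≠ 0 := Nat.cast_ne_zero.mpr hm
  intro n
  induction n with
  | zero =>
    intro f hf
    simpa using LW_base m hm f hf
  | succ n ih =>
    intro f hf
    have hcast : ((n + 1 : ℕ) : ℝ) = (n : ℝ) + 1 := by push_cast; ring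
    simp only [hcast]
    have hp0 : (0 : ℝ) < (n : ℝ) + 1 := by positivity
    have hp1 : (0 : ℝ) < (n : ℝ) + 1 + 1 := by positivity
    have hp1' : ((n : ℝ) + 1 + 1) ≠ 0 := ne_of_gt hp1
    have hp0' : ((n : ℝ) + 1) ≠ 0 := ne_of_gt hp0
    set E : ℝ := ((n : ℝ) + 1 + 1)⁻¹ with hE
    have hE0 : 0 ≤ E := by positivity
    -- independence transferred through `Fin.cons`
    have hcons0 : ∀ (a b : Fin m) (y : Fin (n + 2) → Fin m),
        f 0 (Fin.cons a y) = f 0 (Fin.cons b y) := by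
      intro a b y
      have := hf 0 (Fin.cons b y) a
      rwa [Fin.update_cons_zero] at this
    have hconss : ∀ (i : Fin (n + 2)) (a : Fin m) (y : Fin (n + 2) → Fin m) (b : Fin m),
        f i.succ (Fin.cons a (Function.update y i b)) = f i.succ (Fin.cons a y) := by
      intro i a y b
      rw [Fin.cons_update]
      exact hf i.succ (Fin.cons a y) b
    have hS0 : ∀ a : Fin m, ∑ y : Fin (n + 2) → Fin m, f 0 (Fin.cons a y) =
        (m : ℝ≥0)⁻¹ * ∑ x : Fin (n + 1 + 2) → Fin m, f 0 x := by
      intro a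
      rw [sum_cons_eq (f 0),
        show (∑ b : Fin m, ∑ y : Fin (n + 2) → Fin m, f 0 (Fin.cons b y)) =
            ∑ _b : Fin m, ∑ y : Fin (n + 2) → Fin m, f 0 (Fin.cons a y) from
          Finset.sum_congr rfl fun b _ => Finset.sum_congr rfl fun y _ => hcons0 b a y,
        Finset.sum_const, Finset.card_univ, Fintype.card_fin, nsmul_eq_mul,
        inv_mul_cancel_left₀ hm']
    -- Hölder exponents
    have hpq : Real.HolderConjugate ((n : ℝ) + 1 + 1) (((n : ℝ) + 1 + 1) / ((n : ℝ) + 1)) := by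
      rw [Real.holderConjugate_iff]
      constructor
      · linarith
      · field_simp
        ring
    -- the main estimate for a fixed first coordinate
    have step : ∀ a : Fin m,
        ∑ y : Fin (n + 2) → Fin m, ∏ i : Fin (n + 1 + 2), f i (Fin.cons a y) ^ E ≤
          ((m : ℝ≥0)⁻¹ * ∑ x : Fin (n + 1 + 2) → Fin m, f 0 x) ^ E *
            ∏ i : Fin (n + 2),
              ((m : ℝ≥0)⁻¹ * ∑ y : Fin (n + 2) → Fin m, f i.succ (Fin.cons a y)) ^ E := by
      intro a
      have expand : ∀ y : Fin (n + 2) → Fin m,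
          ∏ i : Fin (n + 1 + 2), f i (Fin.cons a y) ^ E =
            (f 0 (Fin.cons a y) ^ E) * ∏ i : Fin (n + 2), f i.succ (Fin.cons a y) ^ E :=
        fun y => Fin.prod_univ_succ _
      have hhol := NNReal.inner_le_Lp_mul_Lq (Finset.univ : Finset (Fin (n + 2) → Fin m))
        (fun y => f 0 (Fin.cons a y) ^ E)
        (fun y => ∏ i : Fin (n + 2), f i.succ (Fin.cons a y) ^ E) hpq
      -- simplify the first Hölder factor
      have hfac1 : (∑ y : Fin (n + 2) → Fin m,
          (f 0 (Fin.cons a y) ^ E) ^ ((n : ℝ) + 1 + 1)) ^ (1 / ((n : ℝ) + 1 + 1)) =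
          ((m : ℝ≥0)⁻¹ * ∑ x : Fin (n + 1 + 2) → Fin m, f 0 x) ^ E := by
        rw [show (∑ y : Fin (n + 2) → Fin m, (f 0 (Fin.cons a y) ^ E) ^ ((n : ℝ) + 1 + 1))
            = ∑ y : Fin (n + 2) → Fin m, f 0 (Fin.cons a y) from
          Finset.sum_congr rfl fun y _ => by
            rw [← NNReal.rpow_mul, hE, inv_mul_cancel₀ hp1', NNReal.rpow_one]]
        rw [hS0 a, one_div]
      -- simplify and estimate the second Hölder factor via the induction hypothesis
      have hfac2 : (∑ y : Fin (n + 2) → Fin m,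
          (∏ i : Fin (n + 2), f i.succ (Fin.cons a y) ^ E) ^
            (((n : ℝ) + 1 + 1) / ((n : ℝ) + 1))) ^ (((n : ℝ) + 1) / ((n : ℝ) + 1 + 1)) ≤
          ∏ i : Fin (n + 2),
            ((m : ℝ≥0)⁻¹ * ∑ y : Fin (n + 2) → Fin m, f i.succ (Fin.cons a y)) ^ E := by
        have hinner : ∀ y : Fin (n + 2) → Fin m,
            (∏ i : Fin (n + 2), f i.succ (Fin.cons a y) ^ E) ^
              (((n : ℝ) + 1 + 1) / ((n : ℝ) + 1)) =
            ∏ i : Fin (n + 2), f i.succ (Fin.cons a y) ^ (((n : ℝ) + 1)⁻¹) := by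
          intro y
          rw [NNReal.finset_prod_rpow, ← NNReal.rpow_mul,
            show E * (((n : ℝ) + 1 + 1) / ((n : ℝ) + 1)) = ((n : ℝ) + 1)⁻¹ from by
              rw [hE]; field_simp,
            ← NNReal.finset_prod_rpow]
        have hIH := ih (fun i y => f i.succ (Fin.cons a y)) (fun i y b => hconss i a y b)
        calc (∑ y : Fin (n + 2) → Fin m,
              (∏ i : Fin (n + 2), f i.succ (Fin.cons a y) ^ E) ^
                (((n : ℝ) + 1 + 1) / ((n : ℝ) + 1))) ^ (((n : ℝ) + 1) / ((n : ℝ) + 1 + 1))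
            = (∑ y : Fin (n + 2) → Fin m,
                ∏ i : Fin (n + 2), f i.succ (Fin.cons a y) ^ (((n : ℝ) + 1)⁻¹)) ^
                (((n : ℝ) + 1) / ((n : ℝ) + 1 + 1)) := by
              rw [Finset.sum_congr rfl fun y _ => hinner y]
          _ ≤ (∏ i : Fin (n + 2),
                ((m : ℝ≥0)⁻¹ * ∑ y : Fin (n + 2) → Fin m, f i.succ (Fin.cons a y)) ^
                  (((n : ℝ) + 1)⁻¹)) ^ (((n : ℝ) + 1) / ((n : ℝ) + 1 + 1)) :=
              NNReal.rpow_le_rpow hIH (by positivity)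
          _ = ∏ i : Fin (n + 2),
                ((m : ℝ≥0)⁻¹ * ∑ y : Fin (n + 2) → Fin m, f i.succ (Fin.cons a y)) ^ E := by
              rw [← NNReal.finset_prod_rpow]
              refine Finset.prod_congr rfl fun i _ => ?_
              rw [← NNReal.rpow_mul, hE]
              congr 1
              field_simp
      calc ∑ y : Fin (n + 2) → Fin m, ∏ i : Fin (n + 1 + 2), f i (Fin.cons a y) ^ E
          = ∑ y : Fin (n + 2) → Fin m,
              (f 0 (Fin.cons a y) ^ E) * ∏ i : Fin (n + 2), f i.succ (Fin.cons a y) ^ E :=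
            Finset.sum_congr rfl fun y _ => expand y
        _ ≤ _ := hhol
        _ ≤ _ := by
            rw [hfac1, one_div_div]
            exact mul_le_mul_right hfac2 _
    -- sum over the first coordinate and apply the generalized Hölder inequality
    have hw0 : ((((n : ℝ≥0) + 1 + 1)⁻¹ : ℝ≥0) : ℝ) = E := by
      rw [hE]; push_cast; norm_num
    have hgen := gen_holder (Finset.univ : Finset (Fin (n + 2)))
      (fun i a => (m : ℝ≥0)⁻¹ * ∑ y : Fin (n + 2) → Fin m, f i.succ (Fin.cons a y))
      (fun _ => ((n : ℝ≥0) + 1 + 1)⁻¹)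
      (fun i _ => by positivity)
      (by
        rw [Finset.sum_const, Finset.card_univ, Fintype.card_fin, nsmul_eq_mul]
        rw [show ((n + 2 : ℕ) : ℝ≥0) = (n : ℝ≥0) + 1 + 1 by push_cast; ring]
        exact mul_inv_cancel₀ (by positivity))
    simp only [hw0] at hgen
    have hSsucc : ∀ i : Fin (n + 2),
        ∑ a : Fin m, ((m : ℝ≥0)⁻¹ * ∑ y : Fin (n + 2) → Fin m, f i.succ (Fin.cons a y)) =
          (m : ℝ≥0)⁻¹ * ∑ x : Fin (n + 1 + 2) → Fin m, f i.succ x := by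
      intro i
      rw [← Finset.mul_sum, sum_cons_eq (f i.succ)]
    calc ∑ x : Fin (n + 1 + 2) → Fin m, ∏ i, f i x ^ E
        = ∑ a : Fin m, ∑ y : Fin (n + 2) → Fin m,
            ∏ i : Fin (n + 1 + 2), f i (Fin.cons a y) ^ E :=
          sum_cons_eq _
      _ ≤ ∑ a : Fin m, (((m : ℝ≥0)⁻¹ * ∑ x : Fin (n + 1 + 2) → Fin m, f 0 x) ^ E *
            ∏ i : Fin (n + 2),
              ((m : ℝ≥0)⁻¹ * ∑ y : Fin (n + 2) → Fin m, f i.succ (Fin.cons a y)) ^ E) :=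
          Finset.sum_le_sum fun a _ => step a
      _ = ((m : ℝ≥0)⁻¹ * ∑ x : Fin (n + 1 + 2) → Fin m, f 0 x) ^ E *
            ∑ a : Fin m, ∏ i : Fin (n + 2),
              ((m : ℝ≥0)⁻¹ * ∑ y : Fin (n + 2) → Fin m, f i.succ (Fin.cons a y)) ^ E :=
          (Finset.mul_sum _ _ _).symm
      _ ≤ ((m : ℝ≥0)⁻¹ * ∑ x : Fin (n + 1 + 2) → Fin m, f 0 x) ^ E *
            ∏ i : Fin (n + 2),
              (∑ a : Fin m, ((m : ℝ≥0)⁻¹ *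
                ∑ y : Fin (n + 2) → Fin m, f i.succ (Fin.cons a y))) ^ E :=
          mul_le_mul_right hgen _
      _ = ∏ i : Fin (n + 1 + 2), ((m : ℝ≥0)⁻¹ * ∑ x : Fin (n + 1 + 2) → Fin m, f i x) ^ E := by
          rw [Fin.prod_univ_succ
            (fun i : Fin (n + 1 + 2) =>
              ((m : ℝ≥0)⁻¹ * ∑ x : Fin (n + 1 + 2) → Fin m, f i x) ^ E)]
          congr 1
          exact Finset.prod_congr rfl fun i _ => by rw [hSsucc i]

lemma LW {d : ℕ} (hd : 2 ≤ d) (m : ℕ) (hm : m ≠ 0) (f : Fin d → (Fin d → Fin m) → ℝ≥0)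
    (hf : ∀ i x a, f i (Function.update x i a) = f i x) :
    ∑ x : Fin d → Fin m, ∏ i, f i x ^ (((d : ℝ) - 1)⁻¹) ≤
      ∏ i, ((m : ℝ≥0)⁻¹ * ∑ x : Fin d → Fin m, f i x) ^ (((d : ℝ) - 1)⁻¹) := by
  obtain ⟨n, rfl⟩ : ∃ n, d = n + 2 := ⟨d - 2, by omega⟩
  have hc : ((n + 2 : ℕ) : ℝ) - 1 = (n : ℝ) + 1 := by push_cast; ring
  simp only [hc]
  exact LW_aux m hm n f hf

lemma line_count {n N : ℕ} (i : Fin n) (t : (Fin n → Fin (N + 2)) → ℕ → ℝ≥0)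
    (ht1 : ∀ x a k, t (Function.update x i a) k = t x k)
    (ht2 : ∀ x k, ¬ (∀ j, j ≠ i → 1 ≤ (x j : ℕ) ∧ (x j : ℕ) ≤ N) → t x k = 0) :
    ∑ x : Fin n → Fin (N + 2), ∑ k ∈ Finset.range (N + 1), t x k =
      ((N : ℝ≥0) + 2) * ∑ x ∈ dualMesh n N i, t x (x i : ℕ) := by
  classical
  set e := Equiv.funSplitAt i (Fin (N + 2)) with he
  have hupd : ∀ (a b : Fin (N + 2)) (y : {j // j ≠ i} → Fin (N + 2)),
      e.symm (a, y) = Function.update (e.symm (b, y)) i a := by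
    intro a b y
    funext j
    rcases eq_or_ne j i with rfl | hj
    · simp [he]
    · simp [he, hj, Function.update_of_ne hj]
  have hco : ∀ (a : Fin (N + 2)) (y : {j // j ≠ i} → Fin (N + 2)) (j : Fin n) (hj : j ≠ i),
      e.symm (a, y) j = y ⟨j, hj⟩ := by
    intro a y j hj; simp [he, hj]
  have hci : ∀ (a : Fin (N + 2)) (y : {j // j ≠ i} → Fin (N + 2)), e.symm (a, y) i = a := by
    intro a y; simp [he]
  set Q : ({j // j ≠ i} → Fin (N + 2)) → Prop :=
    fun y => ∀ j : {j // j ≠ i}, 1 ≤ (y j : ℕ) ∧ (y j : ℕ) ≤ N with hQdef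
  have hL : ∑ x : Fin n → Fin (N + 2), ∑ k ∈ Finset.range (N + 1), t x k =
      ((N : ℝ≥0) + 2) * ∑ y : {j // j ≠ i} → Fin (N + 2),
        ∑ k ∈ Finset.range (N + 1), t (e.symm (0, y)) k := by
    rw [← Equiv.sum_comp e.symm (fun x => ∑ k ∈ Finset.range (N + 1), t x k),
      Fintype.sum_prod_type]
    rw [Finset.sum_congr rfl fun a (_ : a ∈ Finset.univ) =>
      Finset.sum_congr rfl fun y (_ : y ∈ Finset.univ) =>
        Finset.sum_congr rfl fun k (_ : k ∈ Finset.range (N + 1)) => by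
          rw [hupd a 0 y, ht1]]
    rw [Finset.sum_const, Finset.card_univ, Fintype.card_fin, nsmul_eq_mul]
    congr 1
    push_cast; ring
  have hR : ∑ x ∈ dualMesh n N i, t x (x i : ℕ) =
      ∑ y : {j // j ≠ i} → Fin (N + 2),
        (if Q y then ∑ k ∈ Finset.range (N + 1), t (e.symm (0, y)) k else 0) := by
    rw [dualMesh, Finset.sum_filter]
    rw [← Equiv.sum_comp e.symm
      (fun x => if ((x i : ℕ) ≤ N ∧ ∀ j, j ≠ i → 1 ≤ (x j : ℕ) ∧ (x j : ℕ) ≤ N)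
        then t x (x i : ℕ) else 0),
      Fintype.sum_prod_type, Finset.sum_comm]
    refine Finset.sum_congr rfl fun y _ => ?_
    by_cases hQy : Q y
    · rw [if_pos hQy]
      have key : ∀ a : Fin (N + 2),
          (if ((e.symm (a, y) i : ℕ) ≤ N ∧
              ∀ j, j ≠ i → 1 ≤ ((e.symm (a, y)) j : ℕ) ∧ ((e.symm (a, y)) j : ℕ) ≤ N)
            then t (e.symm (a, y)) ((e.symm (a, y)) i : ℕ) else 0) =
          (fun k : ℕ => if k ≤ N then t (e.symm (0, y)) k else 0) ((a : ℕ)) := by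
        intro a
        simp only [hci]
        by_cases ha : (a : ℕ) ≤ N
        · rw [if_pos ⟨ha, fun j hj => by rw [hco a y j hj]; exact hQy ⟨j, hj⟩⟩, if_pos ha,
            hupd a 0 y, ht1]
        · rw [if_neg (fun hc => ha hc.1), if_neg ha]
      rw [Finset.sum_congr rfl fun a _ => key a,
        Fin.sum_univ_eq_sum_range (fun k => if k ≤ N then t (e.symm (0, y)) k else 0) (N + 2),
        Finset.sum_range_succ, if_neg (by omega), add_zero]
      exact Finset.sum_congr rfl fun k hk =>
        if_pos (by have := Finset.mem_range.mp hk; omega)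
    · rw [if_neg hQy]
      refine Finset.sum_eq_zero fun a _ => ?_
      rw [if_neg]
      rintro ⟨ha, hall⟩
      exact hQy fun j => by
        have := hall j.1 j.2
        rwa [hco a y j.1 j.2] at this
  rw [hL, hR]
  congr 1
  refine Finset.sum_congr rfl fun y _ => ?_
  by_cases hQy : Q y
  · rw [if_pos hQy]
  · rw [if_neg hQy]
    refine Finset.sum_eq_zero fun k _ => ht2 _ k ?_
    intro hall
    exact hQy fun j => by
      have := hall j.1 j.2
      rwa [hco 0 y j.1 j.2] at this


/-- Discrete Gagliardo–Nirenberg–Sobolev inequality for `p = 1`, with the sharper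
product form, for grid functions vanishing outside the interior mesh. -/
theorem discrete_GNS (n : ℕ) (hn : 2 ≤ n) :
    ∃ C : ℝ, 0 < C ∧
      ∀ (N : ℕ) (h : ℝ), h = 1 / (N + 1) →
        ∀ u : (Fin n → ℕ) → ℝ,
          (∀ x : Fin n → ℕ, (¬ ∀ j, 1 ≤ x j ∧ x j ≤ N) → u x = 0) →
          (h ^ n * ∑ x ∈ interiorMesh n N, |u fun j => (x j : ℕ)| ^ ((n : ℝ) / ((n : ℝ) - 1)))
              ^ (((n : ℝ) - 1) / n) ≤
            C * ∑ i : Fin n, h ^ n * ∑ x ∈ dualMesh n N i, |Ddir n N h u i x| ∧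
          (h ^ n * ∑ x ∈ interiorMesh n N, |u fun j => (x j : ℕ)| ^ ((n : ℝ) / ((n : ℝ) - 1)))
              ^ (((n : ℝ) - 1) / n) ≤
            ∏ i : Fin n, (h ^ n * ∑ x ∈ dualMesh n N i, |Ddir n N h u i x|) ^ (1 / (n : ℝ)) :=
  by
  classical
  refine ⟨1, one_pos, ?_⟩
  intro N h hh u hu
  obtain ⟨H, hH⟩ : ∃ H : ℝ≥0, (H : ℝ) = h := ⟨⟨h, by rw [hh]; positivity⟩, rfl⟩
  have hh0 : 0 < h := by rw [hh]; positivity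
  have hnR : (2 : ℝ) ≤ (n : ℝ) := by exact_mod_cast hn
  have hr0 : (0 : ℝ) < (n : ℝ) - 1 := by linarith
  have hrne : ((n : ℝ) - 1) ≠ 0 := ne_of_gt hr0
  have hn0 : (0 : ℝ) < (n : ℝ) := by linarith
  have hnne : (n : ℝ) ≠ 0 := ne_of_gt hn0
  have hr_cast : ((n - 1 : ℕ) : ℝ) = (n : ℝ) - 1 := by
    rw [Nat.cast_sub (by omega), Nat.cast_one]
  set v : (Fin n → Fin (N + 2)) → (Fin n → ℕ) := fun x j => (x j : ℕ) with hv
  set F : Fin n → (Fin n → Fin (N + 2)) → ℝ≥0 := fun i x =>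
    ∑ k ∈ Finset.range (N + 1),
      ‖u (Function.update (v x) i (k + 1)) - u (Function.update (v x) i k)‖₊ with hF
  set T : Fin n → ℝ≥0 := fun i =>
    ∑ x ∈ dualMesh n N i,
      ‖u (Function.update (v x) i ((x i : ℕ) + 1)) -
        u (Function.update (v x) i ((x i : ℕ)))‖₊ with hT
  set L : ℝ≥0 := ∑ x ∈ interiorMesh n N, ‖u (v x)‖₊ ^ ((n : ℝ) / ((n : ℝ) - 1)) with hLdef
  have hvupd : ∀ (x : Fin n → Fin (N + 2)) (i : Fin n) (a : Fin (N + 2)),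
      v (Function.update x i a) = Function.update (v x) i ((a : ℕ)) := by
    intro x i a
    funext j
    rcases eq_or_ne j i with rfl | hj
    · simp [hv]
    · simp [hv, Function.update_of_ne hj]
  have ht1 : ∀ (i : Fin n) (x : Fin n → Fin (N + 2)) (a : Fin (N + 2)) (k : ℕ),
      ‖u (Function.update (v (Function.update x i a)) i (k + 1)) -
        u (Function.update (v (Function.update x i a)) i k)‖₊ =
      ‖u (Function.update (v x) i (k + 1)) - u (Function.update (v x) i k)‖₊ := by
    intro i x a k
    rw [hvupd, Function.update_idem, Function.update_idem]
  have hFind : ∀ (i : Fin n) (x : Fin n → Fin (N + 2)) (a : Fin (N + 2)),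
      F i (Function.update x i a) = F i x := by
    intro i x a
    simp only [hF]
    exact Finset.sum_congr rfl fun k _ => ht1 i x a k
  have ht2 : ∀ (i : Fin n) (x : Fin n → Fin (N + 2)) (k : ℕ),
      ¬ (∀ j, j ≠ i → 1 ≤ (x j : ℕ) ∧ (x j : ℕ) ≤ N) →
      ‖u (Function.update (v x) i (k + 1)) - u (Function.update (v x) i k)‖₊ = 0 := by
    intro i x k hbad
    push_neg at hbad
    obtain ⟨j, hj, hcond⟩ := hbad
    have hz : ∀ l : ℕ, u (Function.update (v x) i l) = 0 := by
      intro l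
      apply hu
      intro hall
      have := hall j
      rw [Function.update_of_ne hj] at this
      exact (hcond this.1).not_ge this.2
    rw [hz, hz, sub_zero, nnnorm_zero]
  have hpoint : ∀ (x : Fin n → Fin (N + 2)) (i : Fin n), ‖u (v x)‖₊ ≤ F i x := by
    intro x i
    have hb : u (Function.update (v x) i 0) = 0 := by
      apply hu
      intro hall
      have := (hall i).1
      rw [Function.update_self] at this
      omega
    have tele : ∑ k ∈ Finset.range ((x i : ℕ)),
        (u (Function.update (v x) i (k + 1)) - u (Function.update (v x) i k)) = u (v x) := by
      rw [Finset.sum_range_sub (fun k => u (Function.update (v x) i k))]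
      rw [show Function.update (v x) i ((x i : ℕ)) = v x from Function.update_eq_self i (v x)]
      rw [hb, sub_zero]
    calc ‖u (v x)‖₊
        = ‖∑ k ∈ Finset.range ((x i : ℕ)),
            (u (Function.update (v x) i (k + 1)) - u (Function.update (v x) i k))‖₊ := by
          rw [tele]
      _ ≤ ∑ k ∈ Finset.range ((x i : ℕ)),
            ‖u (Function.update (v x) i (k + 1)) - u (Function.update (v x) i k)‖₊ :=
          nnnorm_sum_le _ _
      _ ≤ F i x := Finset.sum_le_sum_of_subset
          (Finset.range_subset_range.mpr (by have := (x i).isLt; omega))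
  have hne2 : ((N : ℝ≥0) + 2) ≠ 0 := by positivity
  have hcastN : ((N + 2 : ℕ) : ℝ≥0) = (N : ℝ≥0) + 2 := by push_cast; ring
  have hcount : ∀ i : Fin n,
      ((N + 2 : ℕ) : ℝ≥0)⁻¹ * ∑ x : Fin n → Fin (N + 2), F i x = T i := by
    intro i
    have hlc := line_count i
      (fun x k => ‖u (Function.update (v x) i (k + 1)) - u (Function.update (v x) i k)‖₊)
      (ht1 i) (ht2 i)
    simp only [hF, hT]
    rw [hcastN, hlc, inv_mul_cancel_left₀ hne2]
  have hLW := LW hn (N + 2) (by omega) F hFind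
  have hsplit : ∀ a : ℝ≥0, a ^ ((n : ℝ) / ((n : ℝ) - 1)) =
      ∏ _i : Fin n, a ^ (((n : ℝ) - 1)⁻¹) := by
    intro a
    rw [Finset.prod_const, Finset.card_univ, Fintype.card_fin,
      ← NNReal.rpow_natCast (a ^ (((n : ℝ) - 1)⁻¹)) n, ← NNReal.rpow_mul]
    congr 1
    field_simp
  have hchain : L ≤ ∏ i : Fin n, (T i) ^ (((n : ℝ) - 1)⁻¹) := by
    calc L ≤ ∑ x ∈ interiorMesh n N, ∏ i, (F i x) ^ (((n : ℝ) - 1)⁻¹) := by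
          rw [hLdef]
          refine Finset.sum_le_sum fun x _ => ?_
          rw [hsplit]
          exact Finset.prod_le_prod' fun i _ =>
            NNReal.rpow_le_rpow (hpoint x i) (by positivity)
      _ ≤ ∑ x : Fin n → Fin (N + 2), ∏ i, (F i x) ^ (((n : ℝ) - 1)⁻¹) :=
          Finset.sum_le_sum_of_subset (Finset.subset_univ _)
      _ ≤ ∏ i, (((N + 2 : ℕ) : ℝ≥0)⁻¹ * ∑ x : Fin n → Fin (N + 2), F i x) ^
            (((n : ℝ) - 1)⁻¹) := hLW
      _ = ∏ i : Fin n, (T i) ^ (((n : ℝ) - 1)⁻¹) :=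
          Finset.prod_congr rfl fun i _ => by rw [hcount i]
  have key2 : (H ^ n * L) ^ (((n : ℝ) - 1) / (n : ℝ)) ≤
      ∏ i : Fin n, (H ^ (n - 1) * T i) ^ (1 / (n : ℝ)) := by
    have h1 : H ^ n * L ≤ ∏ i : Fin n, (H ^ (n - 1) * T i) ^ (((n : ℝ) - 1)⁻¹) := by
      calc H ^ n * L ≤ H ^ n * ∏ i, (T i) ^ (((n : ℝ) - 1)⁻¹) := mul_le_mul_right hchain _
        _ = ∏ i : Fin n, (H ^ (n - 1) * T i) ^ (((n : ℝ) - 1)⁻¹) := by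
            rw [Finset.prod_congr rfl fun (i : Fin n) _ =>
              NNReal.mul_rpow (x := H ^ (n - 1)) (y := T i) (z := ((n : ℝ) - 1)⁻¹)]
            rw [Finset.prod_mul_distrib, Finset.prod_const, Finset.card_univ, Fintype.card_fin]
            congr 1
            rw [← NNReal.rpow_natCast H (n - 1), ← NNReal.rpow_mul, hr_cast,
              mul_inv_cancel₀ hrne, NNReal.rpow_one]
    calc (H ^ n * L) ^ (((n : ℝ) - 1) / (n : ℝ))
        ≤ (∏ i : Fin n, (H ^ (n - 1) * T i) ^ (((n : ℝ) - 1)⁻¹)) ^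
            (((n : ℝ) - 1) / (n : ℝ)) := NNReal.rpow_le_rpow h1 (by positivity)
      _ = ∏ i : Fin n, (H ^ (n - 1) * T i) ^ (1 / (n : ℝ)) := by
          rw [NNReal.finset_prod_rpow, ← NNReal.rpow_mul,
            show (((n : ℝ) - 1)⁻¹ * (((n : ℝ) - 1) / (n : ℝ))) = 1 / (n : ℝ) from by
              field_simp,
            ← NNReal.finset_prod_rpow]
  have hgm : ∏ i : Fin n, (H ^ (n - 1) * T i) ^ (1 / (n : ℝ)) ≤
      ∑ i : Fin n, (H ^ (n - 1) * T i) := by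
    have hw : ∑ _i : Fin n, ((n : ℝ≥0))⁻¹ = 1 := by
      rw [Finset.sum_const, Finset.card_univ, Fintype.card_fin, nsmul_eq_mul,
        mul_inv_cancel₀ (by exact_mod_cast (by omega : n ≠ 0))]
    have hgm0 := NNReal.geom_mean_le_arith_mean_weighted Finset.univ
      (fun _ : Fin n => ((n : ℝ≥0))⁻¹) (fun i => H ^ (n - 1) * T i) hw
    simp only [NNReal.coe_inv, NNReal.coe_natCast] at hgm0
    simp only [one_div]
    refine le_trans hgm0 (Finset.sum_le_sum fun i _ => ?_)
    calc ((n : ℝ≥0))⁻¹ * (H ^ (n - 1) * T i) ≤ 1 * (H ^ (n - 1) * T i) := by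
          refine mul_le_mul_left ?_ _
          rw [inv_le_one₀ (by positivity)]
          exact_mod_cast (by omega : 1 ≤ n)
      _ = H ^ (n - 1) * T i := one_mul _
  have conv1 : ∑ x ∈ interiorMesh n N, |u fun j => ((x j : ℕ))| ^ ((n : ℝ) / ((n : ℝ) - 1)) =
      (L : ℝ) := by
    rw [hLdef, NNReal.coe_sum]
    refine Finset.sum_congr rfl fun x _ => ?_
    rw [NNReal.coe_rpow, coe_nnnorm, Real.norm_eq_abs]
  have conv2 : ∀ i : Fin n, ∑ x ∈ dualMesh n N i, |Ddir n N h u i x| = (T i : ℝ) * h⁻¹ := by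
    intro i
    rw [hT, NNReal.coe_sum, Finset.sum_mul]
    refine Finset.sum_congr rfl fun x _ => ?_
    have h1 : Function.update (v x) i ((x i : ℕ)) = v x := Function.update_eq_self i (v x)
    simp only [Ddir, h1]
    rw [abs_div, abs_of_pos hh0, div_eq_mul_inv]
    rfl
  have hfac : ∀ t : ℝ, h ^ n * (t * h⁻¹) = h ^ (n - 1) * t := by
    intro t
    rw [show h ^ n = h ^ (n - 1) * h from by rw [← pow_succ]; congr 1; omega]
    field_simp
  have hdual : ∀ i : Fin n, h ^ n * ∑ x ∈ dualMesh n N i, |Ddir n N h u i x| =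
      ((H ^ (n - 1) * T i : ℝ≥0) : ℝ) := by
    intro i
    rw [conv2 i, hfac, NNReal.coe_mul, NNReal.coe_pow, hH]
  have hlhs : h ^ n * ∑ x ∈ interiorMesh n N,
      |u fun j => ((x j : ℕ))| ^ ((n : ℝ) / ((n : ℝ) - 1)) = ((H ^ n * L : ℝ≥0) : ℝ) := by
    rw [conv1, NNReal.coe_mul, NNReal.coe_pow, hH]
  constructor
  · rw [one_mul, hlhs]
    simp only [hdual]
    rw [← NNReal.coe_rpow]
    calc ((((H ^ n * L) ^ (((n : ℝ) - 1) / (n : ℝ))) : ℝ≥0) : ℝ)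
        ≤ ((∑ i : Fin n, (H ^ (n - 1) * T i) : ℝ≥0) : ℝ) := by
          exact_mod_cast (key2.trans hgm)
      _ = ∑ i : Fin n, ((H ^ (n - 1) * T i : ℝ≥0) : ℝ) := NNReal.coe_sum _ _
  · rw [hlhs]
    simp only [hdual]
    rw [← NNReal.coe_rpow]
    calc ((((H ^ n * L) ^ (((n : ℝ) - 1) / (n : ℝ))) : ℝ≥0) : ℝ)
        ≤ ((∏ i : Fin n, (H ^ (n - 1) * T i) ^ (1 / (n : ℝ)) : ℝ≥0) : ℝ) := by
          exact_mod_cast key2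
      _ = ∏ i : Fin n, ((H ^ (n - 1) * T i : ℝ≥0) : ℝ) ^ (1 / (n : ℝ)) := by
          rw [NNReal.coe_prod]
          exact Finset.prod_congr rfl fun i _ => NNReal.coe_rpow _ _

end GNSaux
end

section
/- Discrete Sobolev embedding: let n ≥ 2 and 1 ≤ p < n, and set p* with 1/p* = 1/p - 1/n. There is a constant C independent of the mesh size h such that every grid function u on M = ((0,1) ∩ hℤ)ⁿ vanishing on the boundary satisfies ‖u‖_{L^{p*}_h(M)} ≤ C‖u‖_{W^{1,p}_h(M)}, where ‖u‖_{W^{1,p}_h(M)}^p = ‖u‖_{L^p_h(M)}^p + ∑_{i=1}^n ‖Dᵢu‖_{L^p_h(Mᵢ*)}^p. -/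
set_option maxHeartbeats 1000000

open scoped ENNReal NNReal
open MeasureTheory

namespace DiscSob

/-- Undivided difference of `u` in direction `i`. -/
noncomputable def Δ (n N : ℕ) (u : (Fin n → ℕ) → ℝ) (i : Fin n)
    (x : Fin n → Fin (N + 2)) : ℝ :=
  u (Function.update (fun j => (x j : ℕ)) i ((x i : ℕ) + 1)) - u (fun j => (x j : ℕ))

variable {n N : ℕ}

lemma coords_update (x : Fin n → Fin (N + 2)) (i : Fin n) (t : Fin (N + 2)) :
    (fun j => ((Function.update x i t) j : ℕ)) = Function.update (fun j => (x j : ℕ)) i (t : ℕ) := by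
  funext j
  by_cases hj : j = i
  · subst hj; simp
  · simp [Function.update_of_ne hj]

lemma u_zero_of_not_interior {u : (Fin n → ℕ) → ℝ}
    (hu : ∀ x : Fin n → ℕ, (¬ ∀ j, 1 ≤ x j ∧ x j ≤ N) → u x = 0)
    {x : Fin n → Fin (N + 2)} (hx : x ∉ interiorMesh n N) :
    u (fun j => (x j : ℕ)) = 0 := by
  apply hu
  simpa [interiorMesh] using hx

lemma delta_zero_of_not_dual {u : (Fin n → ℕ) → ℝ}
    (hu : ∀ x : Fin n → ℕ, (¬ ∀ j, 1 ≤ x j ∧ x j ≤ N) → u x = 0)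
    {i : Fin n} {x : Fin n → Fin (N + 2)} (hx : x ∉ dualMesh n N i) : Δ n N u i x = 0 := by
  rw [dualMesh, Finset.mem_filter] at hx
  push_neg at hx
  have hx' := hx (Finset.mem_univ x)
  rcases le_or_gt (x i : ℕ) N with hle | hgt
  · obtain ⟨j, hji, hj⟩ := hx' hle
    have h1 : u (Function.update (fun j' => (x j' : ℕ)) i ((x i : ℕ) + 1)) = 0 := by
      apply hu; intro hall
      have h : 1 ≤ (x j : ℕ) ∧ (x j : ℕ) ≤ N := by
        simpa [Function.update_of_ne hji] using hall j
      exact (hj h.1).not_ge h.2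
    have h2 : u (fun j' => (x j' : ℕ)) = 0 := by
      apply hu; intro hall
      have h : 1 ≤ (x j : ℕ) ∧ (x j : ℕ) ≤ N := by simpa using hall j
      exact (hj h.1).not_ge h.2
    simp [Δ, h1, h2]
  · have h1 : u (Function.update (fun j' => (x j' : ℕ)) i ((x i : ℕ) + 1)) = 0 := by
      apply hu; intro hall
      have := (hall i).2
      simp at this
      omega
    have h2 : u (fun j' => (x j' : ℕ)) = 0 := by
      apply hu; intro hall
      have := (hall i).2
      omega
    simp [Δ, h1, h2]

/-- Telescoping estimate: the value of a boundary-vanishing grid function is bounded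
by the sum of the absolute differences along any grid line. -/
lemma abs_le_sum_abs_delta {u : (Fin n → ℕ) → ℝ}
    (hu : ∀ x : Fin n → ℕ, (¬ ∀ j, 1 ≤ x j ∧ x j ≤ N) → u x = 0)
    (i : Fin n) (x : Fin n → Fin (N + 2)) :
    |u (fun j => (x j : ℕ))| ≤ ∑ t : Fin (N + 2), |Δ n N u i (Function.update x i t)| := by
  set f : ℕ → ℝ := fun t => u (Function.update (fun j => (x j : ℕ)) i t) with hf
  have h0 : f 0 = 0 := by
    apply hu; intro hall
    have := (hall i).1
    simp at this
  have hxv : f (x i : ℕ) = u (fun j => (x j : ℕ)) := by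
    have : Function.update (fun j => (x j : ℕ)) i ((x i : ℕ)) = fun j => (x j : ℕ) := by
      apply Function.update_eq_self
    simp [hf, this]
  have htel : ∑ t ∈ Finset.range (x i : ℕ), (f (t + 1) - f t) = u (fun j => (x j : ℕ)) := by
    rw [Finset.sum_range_sub f ((x i : ℕ)), h0, hxv, sub_zero]
  calc |u (fun j => (x j : ℕ))|
      = |∑ t ∈ Finset.range (x i : ℕ), (f (t + 1) - f t)| := by rw [htel]
    _ ≤ ∑ t ∈ Finset.range (x i : ℕ), |f (t + 1) - f t| := Finset.abs_sum_le_sum_abs _ _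
    _ ≤ ∑ t ∈ Finset.range (N + 2), |f (t + 1) - f t| := by
        apply Finset.sum_le_sum_of_subset_of_nonneg
        · exact Finset.range_subset_range.2 (Nat.le_of_lt_succ (Nat.lt_succ_of_lt (x i).isLt))
        · intro t _ _; exact abs_nonneg _
    _ = ∑ t : Fin (N + 2), |f ((t : ℕ) + 1) - f (t : ℕ)| := by
        rw [Fin.sum_univ_eq_sum_range (fun t => |f (t + 1) - f t|) (N + 2)]
    _ = ∑ t : Fin (N + 2), |Δ n N u i (Function.update x i t)| := by
        apply Finset.sum_congr rfl
        intro t _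
        congr 1
        rw [Δ, coords_update]
        simp [Function.update_idem, hf]

/-- Lebesgue integral with respect to the product of counting measures on a finite
product of finite types is the finite sum. -/
lemma lintegral_pi_count {n k : ℕ} (g : (Fin n → Fin (k + 1)) → ℝ≥0∞) :
    ∫⁻ x, g x ∂(Measure.pi fun _ : Fin n => Measure.count) = ∑ x, g x := by
  rw [lintegral_fintype]
  refine Finset.sum_congr rfl fun x _ => ?_
  rw [← Set.univ_pi_singleton x, Measure.pi_pi]
  simp [Measure.count_singleton]

lemma lintegral_count_fin {k : ℕ} (g : Fin (k + 1) → ℝ≥0∞) :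
    ∫⁻ t, g t ∂(Measure.count) = ∑ t, g t := by
  rw [lintegral_count, tsum_fintype]

/-- Discrete Gagliardo–Nirenberg–Sobolev inequality in `ℝ≥0∞`, via the grid-lines
lemma with counting measures. -/
lemma stepA_ennreal (hn : 2 ≤ n) (u : (Fin n → ℕ) → ℝ)
    (hu : ∀ x : Fin n → ℕ, (¬ ∀ j, 1 ≤ x j ∧ x j ≤ N) → u x = 0) :
    ∑ x : Fin n → Fin (N + 2), (‖u (fun j => (x j : ℕ))‖₊ : ℝ≥0∞) ^ ((n : ℝ) / ((n : ℝ) - 1))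
      ≤ (∑ x : Fin n → Fin (N + 2), ∑ i : Fin n, (‖Δ n N u i x‖₊ : ℝ≥0∞))
          ^ ((n : ℝ) / ((n : ℝ) - 1)) := by
  have hn1 : (1 : ℝ) < n := by
    have : (2:ℝ) ≤ (n:ℝ) := by exact_mod_cast hn
    linarith
  have hn1' : (0:ℝ) < (n:ℝ) - 1 := by linarith
  set q : ℝ := (n : ℝ) / ((n : ℝ) - 1) with hqdef
  have hq : Real.HolderConjugate (n : ℝ) q := by
    have := Real.HolderConjugate.conjExponent hn1
    simpa [Real.conjExponent, hqdef] using this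
  set F : (Fin n → Fin (N + 2)) → ℝ≥0∞ := fun x => ∑ i, (‖Δ n N u i x‖₊ : ℝ≥0∞) with hF
  have hFmeas : Measurable F := measurable_of_countable F
  have key := MeasureTheory.lintegral_prod_lintegral_pow_le
      (fun _ : Fin n => (Measure.count : Measure (Fin (N + 2)))) (p := q)
      (by simpa [Fintype.card_fin] using hq) hFmeas
  rw [lintegral_pi_count, lintegral_pi_count] at key
  simp only [lintegral_count_fin, Fintype.card_fin] at key
  have hbound : ∀ (x : Fin n → Fin (N + 2)) (i : Fin n),
      (‖u (fun j => (x j : ℕ))‖₊ : ℝ≥0∞) ≤ ∑ t, F (Function.update x i t) := by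
    intro x i
    have hreal := abs_le_sum_abs_delta hu i x
    have h1 : (‖u (fun j => (x j : ℕ))‖₊ : ℝ≥0∞)
        ≤ ∑ t, (‖Δ n N u i (Function.update x i t)‖₊ : ℝ≥0∞) := by
      rw [← ENNReal.coe_finset_sum]
      refine ENNReal.coe_le_coe.2 ?_
      rw [← NNReal.coe_le_coe]
      push_cast
      simpa [Real.norm_eq_abs] using hreal
    refine h1.trans (Finset.sum_le_sum fun t _ => ?_)
    exact Finset.single_le_sum
      (f := fun i' => (‖Δ n N u i' (Function.update x i t)‖₊ : ℝ≥0∞))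
      (fun _ _ => zero_le) (Finset.mem_univ i)
  calc ∑ x : Fin n → Fin (N + 2), (‖u (fun j => (x j : ℕ))‖₊ : ℝ≥0∞) ^ q
      ≤ ∑ x : Fin n → Fin (N + 2),
          ∏ i : Fin n, (∑ t, F (Function.update x i t)) ^ ((1:ℝ)/((n:ℝ)-1)) := by
        refine Finset.sum_le_sum fun x _ => ?_
        have h2 : (‖u (fun j => (x j : ℕ))‖₊ : ℝ≥0∞) ^ q
            = ∏ _i : Fin n, (‖u (fun j => (x j : ℕ))‖₊ : ℝ≥0∞) ^ ((1:ℝ)/((n:ℝ)-1)) := by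
          rw [Finset.prod_const, Finset.card_univ, Fintype.card_fin,
            ← ENNReal.rpow_natCast _ n, ← ENNReal.rpow_mul]
          congr 1
          rw [hqdef]
          field_simp
        rw [h2]
        exact Finset.prod_le_prod' fun i _ =>
          ENNReal.rpow_le_rpow (hbound x i) (by positivity)
    _ ≤ (∑ x, F x) ^ q := key
    _ = (∑ x : Fin n → Fin (N + 2), ∑ i : Fin n, (‖Δ n N u i x‖₊ : ℝ≥0∞)) ^ q := rfl

/-- Real version of the discrete Gagliardo–Nirenberg–Sobolev inequality (`p = 1` case),
restricted to the interior and dual meshes. -/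
lemma stepA_real (hn : 2 ≤ n) (u : (Fin n → ℕ) → ℝ)
    (hu : ∀ x : Fin n → ℕ, (¬ ∀ j, 1 ≤ x j ∧ x j ≤ N) → u x = 0) :
    ∑ x ∈ interiorMesh n N, |u (fun j => (x j : ℕ))| ^ ((n : ℝ) / ((n : ℝ) - 1))
      ≤ (∑ i : Fin n, ∑ x ∈ dualMesh n N i, |Δ n N u i x|) ^ ((n : ℝ) / ((n : ℝ) - 1)) := by
  have hn1 : (1 : ℝ) < n := by
    have : (2:ℝ) ≤ (n:ℝ) := by exact_mod_cast hn
    linarith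
  have hn1' : (0:ℝ) < (n:ℝ) - 1 := by linarith
  set q : ℝ := (n : ℝ) / ((n : ℝ) - 1) with hqdef
  have hq0 : 0 < q := by positivity
  have hL : ∑ x ∈ interiorMesh n N, |u (fun j => (x j : ℕ))| ^ q
      = ∑ x : Fin n → Fin (N + 2), |u (fun j => (x j : ℕ))| ^ q := by
    refine Finset.sum_subset (Finset.subset_univ _) fun x _ hx => ?_
    rw [u_zero_of_not_interior hu hx, abs_zero, Real.zero_rpow hq0.ne']
  have hR : ∀ i : Fin n, ∑ x ∈ dualMesh n N i, |Δ n N u i x|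
      = ∑ x : Fin n → Fin (N + 2), |Δ n N u i x| := by
    intro i
    refine Finset.sum_subset (Finset.subset_univ _) fun x _ hx => ?_
    rw [delta_zero_of_not_dual hu hx, abs_zero]
  rw [hL]
  have big := stepA_ennreal hn u hu
  have hLHS : (∑ x : Fin n → Fin (N + 2), ((‖u (fun j => (x j : ℕ))‖₊ : ℝ≥0∞)) ^ q).toReal
      = ∑ x : Fin n → Fin (N + 2), |u (fun j => (x j : ℕ))| ^ q := by
    rw [ENNReal.toReal_sum]
    · refine Finset.sum_congr rfl fun x _ => ?_
      rw [← ENNReal.toReal_rpow]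
      simp [Real.norm_eq_abs]
    · intro a _
      exact (ENNReal.rpow_lt_top_of_nonneg hq0.le ENNReal.coe_ne_top).ne
  have hsum_ne : (∑ x : Fin n → Fin (N + 2), ∑ i : Fin n, (‖Δ n N u i x‖₊ : ℝ≥0∞)) ≠ ⊤ := by
    simp only [← ENNReal.coe_finset_sum]
    exact ENNReal.coe_ne_top
  have hRHS : ((∑ x : Fin n → Fin (N + 2), ∑ i : Fin n, (‖Δ n N u i x‖₊ : ℝ≥0∞)) ^ q).toReal
      = (∑ x : Fin n → Fin (N + 2), ∑ i : Fin n, |Δ n N u i x|) ^ q := by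
    rw [← ENNReal.toReal_rpow]
    congr 1
    simp only [← ENNReal.coe_finset_sum, ENNReal.coe_toReal]
    push_cast
    simp [Real.norm_eq_abs]
  calc ∑ x : Fin n → Fin (N + 2), |u (fun j => (x j : ℕ))| ^ q
      = (∑ x : Fin n → Fin (N + 2), ((‖u (fun j => (x j : ℕ))‖₊ : ℝ≥0∞)) ^ q).toReal :=
        hLHS.symm
    _ ≤ ((∑ x : Fin n → Fin (N + 2), ∑ i : Fin n, (‖Δ n N u i x‖₊ : ℝ≥0∞)) ^ q).toReal :=
        ENNReal.toReal_mono (ENNReal.rpow_ne_top_of_nonneg hq0.le hsum_ne) big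
    _ = (∑ x : Fin n → Fin (N + 2), ∑ i : Fin n, |Δ n N u i x|) ^ q := hRHS
    _ = (∑ i : Fin n, ∑ x ∈ dualMesh n N i, |Δ n N u i x|) ^ q := by
        rw [Finset.sum_comm]
        congr 1
        exact Finset.sum_congr rfl fun i _ => (hR i).symm

/-- Summing a nonnegative function over the forward-shifted dual mesh is dominated by
the sum over the full grid. -/
lemma sum_update_le (f : (Fin n → ℕ) → ℝ) (hf : ∀ y, 0 ≤ f y) (i : Fin n) :
    ∑ x ∈ dualMesh n N i, f (Function.update (fun j => (x j : ℕ)) i ((x i : ℕ) + 1))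
      ≤ ∑ x : Fin n → Fin (N + 2), f (fun j => (x j : ℕ)) := by
  set φ : (Fin n → Fin (N + 2)) → (Fin n → Fin (N + 2)) :=
    fun x => Function.update x i (x i + 1) with hφ
  have hval : ∀ x ∈ dualMesh n N i, ((x i + 1 : Fin (N + 2)) : ℕ) = (x i : ℕ) + 1 := by
    intro x hx
    have hxi : (x i : ℕ) ≤ N := by
      rw [dualMesh, Finset.mem_filter] at hx
      exact hx.2.1
    have : x i < Fin.last (N + 1) := by
      rw [Fin.lt_iff_val_lt_val]
      simpa using Nat.lt_succ_of_le hxi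
    exact Fin.val_add_one_of_lt this
  have hcoords : ∀ x ∈ dualMesh n N i,
      (fun j => ((φ x j : ℕ))) = Function.update (fun j => (x j : ℕ)) i ((x i : ℕ) + 1) := by
    intro x hx
    funext j
    by_cases hj : j = i
    · subst hj
      simp only [hφ, Function.update_self]
      exact hval x hx
    · simp [hφ, Function.update_of_ne hj]
  have hinj : ∀ x ∈ dualMesh n N i, ∀ y ∈ dualMesh n N i, φ x = φ y → x = y := by
    intro x hx y hy hxy
    funext j
    by_cases hj : j = i
    · subst hj
      have := congrFun hxy j
      simp only [hφ, Function.update_self] at this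
      have hv : ((x j + 1 : Fin (N + 2)) : ℕ) = ((y j + 1 : Fin (N + 2)) : ℕ) := by rw [this]
      rw [hval x hx, hval y hy] at hv
      exact Fin.ext (by omega)
    · have := congrFun hxy j
      simpa [hφ, Function.update_of_ne hj] using this
  calc ∑ x ∈ dualMesh n N i, f (Function.update (fun j => (x j : ℕ)) i ((x i : ℕ) + 1))
      = ∑ x ∈ dualMesh n N i, f (fun j => ((φ x) j : ℕ)) := by
        refine Finset.sum_congr rfl fun x hx => ?_
        rw [hcoords x hx]
    _ = ∑ y ∈ (dualMesh n N i).image φ, f (fun j => (y j : ℕ)) :=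
        (Finset.sum_image (f := fun y : Fin n → Fin (N + 2) => f fun j => ((y j : ℕ))) hinj).symm
    _ ≤ ∑ x : Fin n → Fin (N + 2), f (fun j => (x j : ℕ)) :=
        Finset.sum_le_sum_of_subset_of_nonneg (Finset.subset_univ _) fun x _ _ => hf _

lemma rpow_sub_rpow_le_of_le {a b γ : ℝ} (hb : 0 ≤ b) (hba : b ≤ a) (hγ : 1 ≤ γ) :
    a ^ γ - b ^ γ ≤ γ * a ^ (γ - 1) * (a - b) := by
  have ha : 0 ≤ a := hb.trans hba
  rcases eq_or_lt_of_le ha with ha0 | ha0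
  · have hb0 : b = 0 := le_antisymm (ha0 ▸ hba) hb
    rw [← ha0, ← hb0]
    simp [Real.zero_rpow (by linarith : γ ≠ 0)]
  · set s : ℝ := b / a - 1 with hs
    have hs1 : -1 ≤ s := by
      have : 0 ≤ b / a := div_nonneg hb ha
      simp [hs]; linarith
    have hber := one_add_mul_self_le_rpow_one_add hs1 hγ
    have h1s : 1 + s = b / a := by ring
    rw [h1s, Real.div_rpow hb ha] at hber
    have hapos : 0 < a ^ γ := Real.rpow_pos_of_pos ha0 _
    have h2 : a ^ γ * (1 + γ * s) ≤ b ^ γ := by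
      rw [mul_comm]
      calc (1 + γ * s) * a ^ γ ≤ (b ^ γ / a ^ γ) * a ^ γ :=
            mul_le_mul_of_nonneg_right hber hapos.le
        _ = b ^ γ := by field_simp
    have hpow : a ^ γ / a = a ^ (γ - 1) := by
      rw [Real.rpow_sub ha0, Real.rpow_one]
    have hexp : a ^ γ * (1 + γ * s) = a ^ γ - γ * a ^ (γ - 1) * (a - b) := by
      have : a ^ γ * (γ * s) = -(γ * a ^ (γ - 1) * (a - b)) := by
        rw [← hpow]
        simp only [hs]; field_simp
        ring
      calc a ^ γ * (1 + γ * s) = a ^ γ + a ^ γ * (γ * s) := by ring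
        _ = a ^ γ - γ * a ^ (γ - 1) * (a - b) := by rw [this]; ring
    linarith [hexp ▸ h2]

lemma abs_rpow_sub_rpow_le {a b γ : ℝ} (ha : 0 ≤ a) (hb : 0 ≤ b) (hγ : 1 ≤ γ) :
    |a ^ γ - b ^ γ| ≤ γ * (a ^ (γ - 1) + b ^ (γ - 1)) * |a - b| := by
  have hγ0 : 0 < γ := by linarith
  rcases le_total b a with hba | hab
  · have h1 : b ^ γ ≤ a ^ γ := Real.rpow_le_rpow hb hba hγ0.le
    rw [abs_of_nonneg (by linarith), abs_of_nonneg (by linarith)]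
    have := rpow_sub_rpow_le_of_le hb hba hγ
    have hb1 : 0 ≤ b ^ (γ - 1) := Real.rpow_nonneg hb _
    nlinarith [mul_nonneg (mul_nonneg hγ0.le hb1) (sub_nonneg.2 hba)]
  · have h1 : a ^ γ ≤ b ^ γ := Real.rpow_le_rpow ha hab hγ0.le
    rw [abs_of_nonpos (by linarith), abs_of_nonpos (by linarith)]
    have := rpow_sub_rpow_le_of_le ha hab hγ
    have ha1 : 0 ≤ a ^ (γ - 1) := Real.rpow_nonneg ha _
    nlinarith [mul_nonneg (mul_nonneg hγ0.le ha1) (sub_nonneg.2 hab)]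

lemma add_rpow_le_two_rpow {s t c : ℝ} (hs : 0 ≤ s) (ht : 0 ≤ t) (hc : 0 ≤ c) :
    (s + t) ^ c ≤ 2 ^ c * (s ^ c + t ^ c) := by
  have hmax : s + t ≤ 2 * max s t := by
    rcases le_total s t with h | h
    · simp [max_eq_right h]; linarith
    · simp [max_eq_left h]; linarith
  calc (s + t) ^ c ≤ (2 * max s t) ^ c :=
        Real.rpow_le_rpow (by linarith) hmax hc
    _ = 2 ^ c * (max s t) ^ c := Real.mul_rpow (by norm_num) (le_max_of_le_left hs)
    _ ≤ 2 ^ c * (s ^ c + t ^ c) := by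
        have h2 : (0:ℝ) ≤ 2 ^ c := Real.rpow_nonneg (by norm_num) _
        refine mul_le_mul_of_nonneg_left ?_ h2
        rcases le_total s t with h | h
        · rw [max_eq_right h]
          exact le_add_of_nonneg_left (Real.rpow_nonneg hs _)
        · rw [max_eq_left h]
          exact le_add_of_nonneg_right (Real.rpow_nonneg ht _)

/-- The mesh-size-free core estimate: `‖u‖_{p*} ≤ 4γ ∑ᵢ ‖Δᵢu‖_p` for the plain
(counting) sums. -/
lemma stepB (hn : 2 ≤ n) (p pstar : ℝ) (hp1 : 1 ≤ p) (hpn : p < n)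
    (hps : 1 / pstar = 1 / p - 1 / n) (u : (Fin n → ℕ) → ℝ)
    (hu : ∀ x : Fin n → ℕ, (¬ ∀ j, 1 ≤ x j ∧ x j ≤ N) → u x = 0) :
    (∑ x ∈ interiorMesh n N, |u (fun j => (x j : ℕ))| ^ pstar) ^ (1 / pstar)
      ≤ (4 * (pstar * ((n : ℝ) - 1) / (n : ℝ))) *
          ∑ i : Fin n, (∑ x ∈ dualMesh n N i, |Δ n N u i x| ^ p) ^ (1 / p) := by
  have hn1 : (1 : ℝ) < n := by
    have : (2 : ℝ) ≤ (n : ℝ) := by exact_mod_cast hn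
    linarith
  have hn1' : (0 : ℝ) < (n : ℝ) - 1 := by linarith
  have hp0 : (0 : ℝ) < p := by linarith
  have hnp : (0 : ℝ) < (n : ℝ) - p := by linarith
  have hips : (0 : ℝ) < 1 / p - 1 / n := by
    rw [sub_pos]
    exact one_div_lt_one_div_of_lt hp0 hpn
  have hpst0 : (0 : ℝ) < pstar := one_div_pos.mp (hps ▸ hips)
  have hpstar_eq : pstar = (n : ℝ) * p / ((n : ℝ) - p) := by
    have h := (one_div_one_div pstar).symm
    rw [hps] at h
    rw [h]
    rw [div_eq_div_iff (by positivity) hnp.ne']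
    field_simp
  set γ : ℝ := pstar * ((n : ℝ) - 1) / (n : ℝ) with hγdef
  have hγ_eq : γ = p * ((n : ℝ) - 1) / ((n : ℝ) - p) := by
    rw [hγdef, hpstar_eq]
    field_simp
  have hγ1 : 1 ≤ γ := by
    rw [hγ_eq, le_div_iff₀ hnp]
    nlinarith
  have hγ0 : (0 : ℝ) < γ := lt_of_lt_of_le one_pos hγ1
  set q : ℝ := (n : ℝ) / ((n : ℝ) - 1) with hqdef
  have hq1 : 1 < q := by
    rw [hqdef, lt_div_iff₀ hn1']
    linarith
  have hq0 : (0 : ℝ) < q := by linarith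
  have hγq : γ * q = pstar := by
    rw [hγdef, hqdef]
    field_simp
  set v : (Fin n → ℕ) → ℝ := fun y => |u y| ^ γ with hvdef
  have hv : ∀ y : Fin n → ℕ, (¬ ∀ j, 1 ≤ y j ∧ y j ≤ N) → v y = 0 := by
    intro y hy
    rw [hvdef]
    simp only
    rw [hu y hy, abs_zero, Real.zero_rpow hγ0.ne']
  have hA := stepA_real hn v hv
  set X : ℝ := ∑ x ∈ interiorMesh n N, |u (fun j => (x j : ℕ))| ^ pstar with hXdef
  have hX0 : (0 : ℝ) ≤ X :=
    Finset.sum_nonneg fun x _ => Real.rpow_nonneg (abs_nonneg _) _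
  have hLa : ∑ x ∈ interiorMesh n N, |v (fun j => (x j : ℕ))| ^ q = X := by
    refine Finset.sum_congr rfl fun x _ => ?_
    rw [hvdef]
    simp only
    rw [abs_of_nonneg (Real.rpow_nonneg (abs_nonneg _) _),
      ← Real.rpow_mul (abs_nonneg _), hγq]
  set T : Fin n → ℝ := fun i => ∑ x ∈ dualMesh n N i, |Δ n N v i x| with hTdef
  set G : Fin n → ℝ := fun i => ∑ x ∈ dualMesh n N i, |Δ n N u i x| ^ p with hGdef
  have hG0 : ∀ i, 0 ≤ G i := fun i =>
    Finset.sum_nonneg fun x _ => Real.rpow_nonneg (abs_nonneg _) _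
  have hT0 : ∀ i, 0 ≤ T i := fun i => Finset.sum_nonneg fun x _ => abs_nonneg _
  have hXq : X ≤ (∑ i, T i) ^ q := by
    rw [← hLa]
    exact hA
  have hXuniv : ∑ x : Fin n → Fin (N + 2), |u (fun j => (x j : ℕ))| ^ pstar = X := by
    rw [hXdef]
    refine (Finset.sum_subset (Finset.subset_univ _) fun x _ hx => ?_).symm
    rw [u_zero_of_not_interior hu hx, abs_zero, Real.zero_rpow hpst0.ne']
  have hshift : ∀ i : Fin n,
      ∑ x ∈ dualMesh n N i,
        |u (Function.update (fun j => (x j : ℕ)) i ((x i : ℕ) + 1))| ^ pstar ≤ X := by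
    intro i
    rw [← hXuniv]
    exact sum_update_le (fun y => |u y| ^ pstar)
      (fun y => Real.rpow_nonneg (abs_nonneg _) _) i
  have hplain : ∀ i : Fin n,
      ∑ x ∈ dualMesh n N i, |u (fun j => (x j : ℕ))| ^ pstar ≤ X := by
    intro i
    rw [← hXuniv]
    exact Finset.sum_le_sum_of_subset_of_nonneg (Finset.subset_univ _)
      fun x _ _ => Real.rpow_nonneg (abs_nonneg _) _
  have hpt : ∀ (i : Fin n) (x : Fin n → Fin (N + 2)),
      |Δ n N v i x| ≤ γ *
        ((|u (Function.update (fun j => (x j : ℕ)) i ((x i : ℕ) + 1))| ^ (γ - 1)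
          + |u (fun j => (x j : ℕ))| ^ (γ - 1)) * |Δ n N u i x|) := by
    intro i x
    have h1 : Δ n N v i x
        = |u (Function.update (fun j => (x j : ℕ)) i ((x i : ℕ) + 1))| ^ γ
          - |u (fun j => (x j : ℕ))| ^ γ := rfl
    rw [h1]
    have h2 := abs_rpow_sub_rpow_le (abs_nonneg
        (u (Function.update (fun j => (x j : ℕ)) i ((x i : ℕ) + 1))))
      (abs_nonneg (u (fun j => (x j : ℕ)))) hγ1
    refine h2.trans ?_
    rw [mul_assoc]
    refine mul_le_mul_of_nonneg_left ?_ hγ0.le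
    refine mul_le_mul_of_nonneg_left ?_ (by positivity)
    exact abs_abs_sub_abs_le_abs_sub _ _
  have hclaim : ∀ i : Fin n, T i ≤ 4 * γ * X ^ (1 - 1 / p) * (G i) ^ (1 / p) := by
    intro i
    rcases eq_or_lt_of_le hp1 with hpe | hpgt
    · -- p = 1
      have hγ1' : γ = 1 := by
        rw [hγ_eq, ← hpe]
        field_simp
      have hTle : T i ≤ 2 * G i := by
        rw [hTdef, hGdef]
        simp only
        rw [Finset.mul_sum]
        refine Finset.sum_le_sum fun x _ => ?_
        refine (hpt i x).trans ?_
        rw [hγ1']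
        simp only [sub_self, Real.rpow_zero, one_mul, ← hpe, Real.rpow_one]
        linarith [abs_nonneg (Δ n N u i x)]
      have hX1 : X ^ (1 - 1 / p) = 1 := by
        rw [← hpe]
        norm_num
      have hGp : (G i) ^ (1 / p) = G i := by
        rw [← hpe]
        norm_num
      rw [hX1, hGp, hγ1']
      norm_num
      linarith [hG0 i]
    · -- 1 < p
      have hpq : Real.HolderConjugate p (p / (p - 1)) :=
        Real.HolderConjugate.conjExponent hpgt
      set pc : ℝ := p / (p - 1) with hpcdef
      have hpc0 : 0 < pc := hpq.symm.pos
      have hp1' : p - 1 ≠ 0 := (by linarith : (0:ℝ) < p - 1).ne'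
      have hgp : (γ - 1) * pc = pstar := by
        rw [hγ_eq, hpstar_eq, hpcdef]
        field_simp
        ring
      set w : (Fin n → Fin (N + 2)) → ℝ := fun x =>
        |u (Function.update (fun j => (x j : ℕ)) i ((x i : ℕ) + 1))| ^ (γ - 1)
          + |u (fun j => (x j : ℕ))| ^ (γ - 1) with hwdef
      have hw0 : ∀ x, 0 ≤ w x := fun x => by positivity
      have hT1 : T i ≤ γ * ∑ x ∈ dualMesh n N i, w x * |Δ n N u i x| := by
        rw [hTdef]
        simp only
        rw [Finset.mul_sum]
        exact Finset.sum_le_sum fun x _ => hpt i x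
      have hHolder := Real.inner_le_Lp_mul_Lq_of_nonneg (dualMesh n N i)
        hpq.symm (fun x _ => hw0 x) (fun x _ => abs_nonneg (Δ n N u i x))
      have hwsum : ∑ x ∈ dualMesh n N i, (w x) ^ pc ≤ 2 ^ pc * (2 * X) := by
        have hstep : ∀ x ∈ dualMesh n N i, (w x) ^ pc ≤
            2 ^ pc * (|u (Function.update (fun j => (x j : ℕ)) i ((x i : ℕ) + 1))| ^ pstar
              + |u (fun j => (x j : ℕ))| ^ pstar) := by
          intro x _
          rw [hwdef]
          simp only
          refine (add_rpow_le_two_rpow (by positivity) (by positivity) hpc0.le).trans ?_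
          rw [← Real.rpow_mul (abs_nonneg _), ← Real.rpow_mul (abs_nonneg _), hgp]
        calc ∑ x ∈ dualMesh n N i, (w x) ^ pc
            ≤ ∑ x ∈ dualMesh n N i,
              2 ^ pc * (|u (Function.update (fun j => (x j : ℕ)) i ((x i : ℕ) + 1))| ^ pstar
                + |u (fun j => (x j : ℕ))| ^ pstar) := Finset.sum_le_sum hstep
          _ = 2 ^ pc * ((∑ x ∈ dualMesh n N i,
                |u (Function.update (fun j => (x j : ℕ)) i ((x i : ℕ) + 1))| ^ pstar)
                + ∑ x ∈ dualMesh n N i, |u (fun j => (x j : ℕ))| ^ pstar) := by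
              rw [← Finset.sum_add_distrib, Finset.mul_sum]
          _ ≤ 2 ^ pc * (X + X) := by
              refine mul_le_mul_of_nonneg_left ?_ (by positivity)
              exact add_le_add (hshift i) (hplain i)
          _ = 2 ^ pc * (2 * X) := by ring
      have h2pc : (0:ℝ) < 2 ^ pc := Real.rpow_pos_of_pos (by norm_num) _
      have hW0 : 0 ≤ ∑ x ∈ dualMesh n N i, (w x) ^ pc :=
        Finset.sum_nonneg fun x _ => Real.rpow_nonneg (hw0 x) _
      have hwfin : (∑ x ∈ dualMesh n N i, (w x) ^ pc) ^ (1 / pc)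
          ≤ 4 * X ^ (1 - 1 / p) := by
        have h1 : (∑ x ∈ dualMesh n N i, (w x) ^ pc) ^ (1 / pc)
            ≤ (2 ^ pc * (2 * X)) ^ (1 / pc) :=
          Real.rpow_le_rpow hW0 hwsum (by positivity)
        refine h1.trans ?_
        have h2 : ((2:ℝ) ^ pc * (2 * X)) ^ (1 / pc)
            = 2 * (2 ^ (1 / pc) * X ^ (1 / pc)) := by
          rw [Real.mul_rpow h2pc.le (by positivity),
            Real.mul_rpow (by norm_num) hX0,
            ← Real.rpow_mul (by norm_num : (0:ℝ) ≤ 2),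
            mul_one_div_cancel hpc0.ne', Real.rpow_one]
        rw [h2]
        have h3 : (2:ℝ) ^ (1 / pc) ≤ 2 := by
          nth_rewrite 2 [show (2:ℝ) = 2 ^ (1:ℝ) from (Real.rpow_one 2).symm]
          apply Real.rpow_le_rpow_of_exponent_le (by norm_num)
          rw [div_le_one hpc0]
          linarith [hpq.symm.lt]
        have h4 : X ^ (1 / pc) = X ^ (1 - 1 / p) := by
          congr 1
          rw [hpcdef]
          rw [one_div_div]
          field_simp
        rw [h4]
        have hXp : 0 ≤ X ^ (1 - 1 / p) := Real.rpow_nonneg hX0 _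
        nlinarith [mul_le_mul_of_nonneg_right h3 hXp]
      have hGp0 : 0 ≤ (G i) ^ (1 / p) := Real.rpow_nonneg (hG0 i) _
      calc T i ≤ γ * ∑ x ∈ dualMesh n N i, w x * |Δ n N u i x| := hT1
        _ ≤ γ * ((∑ x ∈ dualMesh n N i, (w x) ^ pc) ^ (1 / pc)
              * (∑ x ∈ dualMesh n N i, |Δ n N u i x| ^ p) ^ (1 / p)) :=
            mul_le_mul_of_nonneg_left hHolder hγ0.le
        _ ≤ γ * ((4 * X ^ (1 - 1 / p)) * (G i) ^ (1 / p)) := by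
            refine mul_le_mul_of_nonneg_left ?_ hγ0.le
            rw [hGdef]
            exact mul_le_mul_of_nonneg_right hwfin hGp0
        _ = 4 * γ * X ^ (1 - 1 / p) * (G i) ^ (1 / p) := by ring
  set S : ℝ := ∑ i : Fin n, (∑ x ∈ dualMesh n N i, |Δ n N u i x| ^ p) ^ (1 / p) with hSdef
  have hS0 : 0 ≤ S := Finset.sum_nonneg fun i _ =>
    Real.rpow_nonneg (Finset.sum_nonneg fun x _ => Real.rpow_nonneg (abs_nonneg _) _) _
  have hsumT : ∑ i, T i ≤ 4 * γ * X ^ (1 - 1 / p) * S := by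
    rw [hSdef, Finset.mul_sum]
    exact Finset.sum_le_sum fun i _ => hclaim i
  have hXq2 : X ≤ (4 * γ * X ^ (1 - 1 / p) * S) ^ q :=
    hXq.trans (Real.rpow_le_rpow (Finset.sum_nonneg fun i _ => hT0 i) hsumT hq0.le)
  rcases hX0.eq_or_lt with hX00 | hXpos
  · rw [← hX00, Real.zero_rpow (one_div_pos.mpr hpst0).ne']
    exact mul_nonneg (by positivity) hS0
  · have hXppos : 0 < X ^ (1 - 1 / p) := Real.rpow_pos_of_pos hXpos _
    have hq_inv : X ^ ((1 : ℝ) / q) ≤ 4 * γ * X ^ (1 - 1 / p) * S := by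
      have h5 : ((4 * γ * X ^ (1 - 1 / p) * S) ^ q) ^ (1 / q)
          = 4 * γ * X ^ (1 - 1 / p) * S := by
        rw [← Real.rpow_mul (by positivity), mul_one_div_cancel hq0.ne', Real.rpow_one]
      calc X ^ ((1 : ℝ) / q) ≤ ((4 * γ * X ^ (1 - 1 / p) * S) ^ q) ^ (1 / q) :=
            Real.rpow_le_rpow hX0 hXq2 (by positivity)
        _ = _ := h5
    have hsplit : X ^ (1 / pstar) * X ^ (1 - 1 / p) = X ^ ((1 : ℝ) / q) := by
      rw [← Real.rpow_add hXpos]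
      congr 1
      rw [hps, hqdef, one_div_div]
      field_simp
      ring
    have hfin : X ^ (1 / pstar) * X ^ (1 - 1 / p) ≤ (4 * γ * S) * X ^ (1 - 1 / p) :=
      calc X ^ (1 / pstar) * X ^ (1 - 1 / p) = X ^ ((1 : ℝ) / q) := hsplit
        _ ≤ 4 * γ * X ^ (1 - 1 / p) * S := hq_inv
        _ = (4 * γ * S) * X ^ (1 - 1 / p) := by ring
    exact le_of_mul_le_mul_right hfin hXppos

end DiscSob

/-- Discrete Sobolev embedding `‖u‖_{L^{p*}_h} ≤ C ‖u‖_{W^{1,p}_h}` with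
`1/p* = 1/p - 1/n`, `1 ≤ p < n`, `C` independent of the mesh size. -/
theorem discrete_sobolev (n : ℕ) (hn : 2 ≤ n) (p pstar : ℝ) (hp1 : 1 ≤ p)
    (hpn : p < n) (hps : 1 / pstar = 1 / p - 1 / n) :
    ∃ C : ℝ, 0 < C ∧
      ∀ (N : ℕ) (h : ℝ), h = 1 / (N + 1) →
        ∀ u : (Fin n → ℕ) → ℝ,
          (∀ x : Fin n → ℕ, (¬ ∀ j, 1 ≤ x j ∧ x j ≤ N) → u x = 0) →
          (h ^ n * ∑ x ∈ interiorMesh n N, |u fun j => (x j : ℕ)| ^ pstar) ^ (1 / pstar) ≤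
            C * ((h ^ n * ∑ x ∈ interiorMesh n N, |u fun j => (x j : ℕ)| ^ p +
                  ∑ i : Fin n, h ^ n * ∑ x ∈ dualMesh n N i, |Ddir n N h u i x| ^ p)
                ^ (1 / p)) := by
  have hn1 : (1 : ℝ) < n := by
    have : (2 : ℝ) ≤ (n : ℝ) := by exact_mod_cast hn
    linarith
  have hn1' : (0 : ℝ) < (n : ℝ) - 1 := by linarith
  have hp0 : (0 : ℝ) < p := by linarith
  have hnp : (0 : ℝ) < (n : ℝ) - p := by linarith
  have hips : (0 : ℝ) < 1 / p - 1 / n := by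
    rw [sub_pos]
    exact one_div_lt_one_div_of_lt hp0 hpn
  have hpst0 : (0 : ℝ) < pstar := one_div_pos.mp (hps ▸ hips)
  set γ : ℝ := pstar * ((n : ℝ) - 1) / (n : ℝ) with hγdef
  have hγ0 : (0 : ℝ) < γ := by rw [hγdef]; positivity
  have hn0 : (0 : ℝ) < (n : ℝ) := by linarith
  refine ⟨4 * γ * n, by positivity, ?_⟩
  intro N h hh u hu
  have hh0 : (0 : ℝ) < h := by rw [hh]; positivity
  have hB := DiscSob.stepB hn p pstar hp1 hpn hps u hu
  set X : ℝ := ∑ x ∈ interiorMesh n N, |u (fun j => (x j : ℕ))| ^ pstar with hXdef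
  have hX0 : 0 ≤ X := Finset.sum_nonneg fun x _ => Real.rpow_nonneg (abs_nonneg _) _
  set G : Fin n → ℝ := fun i => ∑ x ∈ dualMesh n N i, |DiscSob.Δ n N u i x| ^ p with hGdef
  have hG0 : ∀ i, 0 ≤ G i := fun i =>
    Finset.sum_nonneg fun x _ => Real.rpow_nonneg (abs_nonneg _) _
  set Gsum : ℝ := ∑ i : Fin n, G i with hGsumdef
  have hGsum0 : 0 ≤ Gsum := Finset.sum_nonneg fun i _ => hG0 i
  have hDd : ∀ (i : Fin n), ∑ x ∈ dualMesh n N i, |Ddir n N h u i x| ^ p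
      = G i / h ^ ((p : ℝ)) := by
    intro i
    rw [hGdef]
    simp only
    rw [Finset.sum_div]
    refine Finset.sum_congr rfl fun x _ => ?_
    have : Ddir n N h u i x = DiscSob.Δ n N u i x / h := rfl
    rw [this, abs_div, abs_of_pos hh0, Real.div_rpow (abs_nonneg _) hh0.le]
  have hSle : ∑ i : Fin n, (G i) ^ (1 / p) ≤ (n : ℝ) * Gsum ^ (1 / p) := by
    calc ∑ i : Fin n, (G i) ^ (1 / p) ≤ ∑ _i : Fin n, Gsum ^ (1 / p) := by
          refine Finset.sum_le_sum fun i _ => ?_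
          refine Real.rpow_le_rpow (hG0 i) ?_ (by positivity)
          rw [hGsumdef]
          exact Finset.single_le_sum (fun j _ => hG0 j) (Finset.mem_univ i)
      _ = (n : ℝ) * Gsum ^ (1 / p) := by
          rw [Finset.sum_const, Finset.card_univ, Fintype.card_fin, nsmul_eq_mul]
  have hpow_eq : (h ^ n) ^ (1 / pstar) = (h ^ n / h ^ ((p : ℝ))) ^ (1 / p) := by
    rw [← Real.rpow_natCast h n, ← Real.rpow_sub hh0, ← Real.rpow_mul hh0.le,
      ← Real.rpow_mul hh0.le]
    congr 1
    rw [hps]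
    field_simp
  have hRHSsum : ∑ i : Fin n, h ^ n * ∑ x ∈ dualMesh n N i, |Ddir n N h u i x| ^ p
      = (h ^ n / h ^ ((p : ℝ))) * Gsum := by
    rw [hGsumdef, Finset.mul_sum]
    refine Finset.sum_congr rfl fun i _ => ?_
    rw [hDd i]
    ring
  have hhn0 : (0 : ℝ) ≤ h ^ n := by positivity
  have hXp0 : 0 ≤ h ^ n * ∑ x ∈ interiorMesh n N, |u (fun j => (x j : ℕ))| ^ p :=
    mul_nonneg hhn0 (Finset.sum_nonneg fun x _ => Real.rpow_nonneg (abs_nonneg _) _)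
  calc (h ^ n * X) ^ (1 / pstar)
      = (h ^ n) ^ (1 / pstar) * X ^ (1 / pstar) := Real.mul_rpow hhn0 hX0
    _ ≤ (h ^ n) ^ (1 / pstar) * ((4 * γ) * ∑ i : Fin n, (G i) ^ (1 / p)) := by
        refine mul_le_mul_of_nonneg_left ?_ (Real.rpow_nonneg hhn0 _)
        exact hB
    _ ≤ (h ^ n) ^ (1 / pstar) * ((4 * γ) * ((n : ℝ) * Gsum ^ (1 / p))) := by
        refine mul_le_mul_of_nonneg_left ?_ (Real.rpow_nonneg hhn0 _)
        exact mul_le_mul_of_nonneg_left hSle (by positivity)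
    _ = 4 * γ * n * ((h ^ n) ^ (1 / pstar) * Gsum ^ (1 / p)) := by ring
    _ = 4 * γ * n * ((h ^ n / h ^ ((p : ℝ))) * Gsum) ^ (1 / p) := by
        rw [Real.mul_rpow (by positivity) hGsum0, hpow_eq]
    _ ≤ 4 * γ * n * ((h ^ n * ∑ x ∈ interiorMesh n N, |u (fun j => (x j : ℕ))| ^ p +
          ∑ i : Fin n, h ^ n * ∑ x ∈ dualMesh n N i, |Ddir n N h u i x| ^ p) ^ (1 / p)) := by
        refine mul_le_mul_of_nonneg_left ?_ (by positivity)
        refine Real.rpow_le_rpow (by positivity) ?_ (by positivity)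
        rw [hRHSsum]
        linarith
end
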